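/- If E₁, E₂, E₃ : ℝ → ℝ³ is a differentiable orthonormal frame, then there exists a (unique) vector field Ω : ℝ → ℝ³ such that Eᵢ'(s) = Ω(s) × Eᵢ(s) for all i and all s. -/

import Mathlib

/-!
Differentiating `Eᵢ ⬝ᵥ Eⱼ = δᵢⱼ` shows that `Eᵢ' ⬝ᵥ Eⱼ` is skew-symmetric. For an orthonormal
frame `eᵢ` and vectors `dᵢ` with `dᵢ ⬝ᵥ eⱼ` skew, the Darboux vector `ω = ½ ∑ᵢ eᵢ × dᵢ`
satisfies `ω × eⱼ = dⱼ` by the triple product expansion; conversely `∑ᵢ eᵢ × (ω × eᵢ) = 2ω`,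
so `ω` is recovered from the products `ω × eᵢ`, which gives uniqueness.
-/

open Matrix

theorem HasDerivAt.dotProduct {𝕜 ι : Type*} [NontriviallyNormedField 𝕜] [Fintype ι]
    {f g : 𝕜 → ι → 𝕜} {f' g' : ι → 𝕜} {x : 𝕜} (hf : HasDerivAt f f' x)
    (hg : HasDerivAt g g' x) :
    HasDerivAt (fun t => f t ⬝ᵥ g t) (f' ⬝ᵥ g x + f x ⬝ᵥ g') x := by
  unfold _root_.dotProduct
  rw [← Finset.sum_add_distrib]
  exact HasDerivAt.fun_sum fun k _ =>
    (hasDerivAt_pi.mp hf k).mul (hasDerivAt_pi.mp hg k)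

theorem HasDerivAt.dotProduct_add_dotProduct_eq_zero {𝕜 ι : Type*} [NontriviallyNormedField 𝕜]
    [Fintype ι] {f g : 𝕜 → ι → 𝕜} {f' g' : ι → 𝕜} {x c : 𝕜} (hf : HasDerivAt f f' x)
    (hg : HasDerivAt g g' x) (hc : ∀ t, f t ⬝ᵥ g t = c) :
    f' ⬝ᵥ g x + f x ⬝ᵥ g' = 0 := by
  have hconst : (fun t => f t ⬝ᵥ g t) = fun _ => c := funext hc
  exact (hf.dotProduct hg).unique (hconst ▸ hasDerivAt_const x c)

section Orthonormal

variable {R n : Type*} [CommRing R] [Fintype n] [DecidableEq n]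

/-- A square matrix with orthonormal rows also has orthonormal columns. -/
theorem sum_dotProduct_smul_of_orthonormal {e : n → n → R}
    (he : ∀ i j, e i ⬝ᵥ e j = if i = j then 1 else 0) (v : n → R) :
    ∑ i, (e i ⬝ᵥ v) • e i = v := by
  have hrows : of e * (of e)ᵀ = 1 := by
    ext i j
    simpa [Matrix.mul_apply, dotProduct, Matrix.one_apply] using he i j
  have hcols : (of e)ᵀ * of e = 1 := mul_eq_one_comm.mp hrows
  calc ∑ i, (e i ⬝ᵥ v) • e i = (of e)ᵀ *ᵥ (of e *ᵥ v) := by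
        rw [mulVec_transpose, vecMul_eq_sum]; rfl
    _ = v := by rw [mulVec_mulVec, hcols, one_mulVec]

end Orthonormal

section Darboux

variable {K : Type*} [Field K] {e : Fin 3 → Fin 3 → K}

theorem sum_cross_cross_of_orthonormal (he : ∀ i j, e i ⬝ᵥ e j = if i = j then 1 else 0)
    (ω : Fin 3 → K) : ∑ i, e i ⨯₃ (ω ⨯₃ e i) = (2 : K) • ω := by
  simp only [cross_cross_eq_smul_sub_smul', he, if_true, one_smul, Finset.sum_sub_distrib,
    dotProduct_comm ω, sum_dotProduct_smul_of_orthonormal he, Finset.sum_const,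
    Finset.card_univ, Fintype.card_fin]
  module

def darbouxVector (e d : Fin 3 → Fin 3 → K) : Fin 3 → K :=
  (2 : K)⁻¹ • ∑ i, e i ⨯₃ d i

variable [NeZero (2 : K)]

theorem darbouxVector_cross (he : ∀ i j, e i ⬝ᵥ e j = if i = j then 1 else 0)
    {d : Fin 3 → Fin 3 → K} (hd : ∀ i j, d i ⬝ᵥ e j + e i ⬝ᵥ d j = 0) (j : Fin 3) :
    darbouxVector e d ⨯₃ e j = d j := by
  have hskew : ∀ i, d i ⬝ᵥ e j = -(e i ⬝ᵥ d j) := fun i => eq_neg_of_add_eq_zero_left (hd i j)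
  have : (∑ i, e i ⨯₃ d i) ⨯₃ e j = (2 : K) • d j := by
    simp only [map_sum, LinearMap.sum_apply, cross_cross_eq_smul_sub_smul, he, hskew,
      Finset.sum_sub_distrib, neg_smul, ite_smul, one_smul, zero_smul]
    rw [Fintype.sum_ite_eq', Finset.sum_neg_distrib, sub_neg_eq_add,
      sum_dotProduct_smul_of_orthonormal he, two_smul]
  rw [darbouxVector, map_smul, LinearMap.smul_apply, this, smul_smul,
    inv_mul_cancel₀ two_ne_zero, one_smul]

theorem eq_darbouxVector_of_cross (he : ∀ i j, e i ⬝ᵥ e j = if i = j then 1 else 0)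
    {d : Fin 3 → Fin 3 → K} {ω : Fin 3 → K} (hω : ∀ i, d i = ω ⨯₃ e i) :
    ω = darbouxVector e d := by
  rw [darbouxVector, funext hω, sum_cross_cross_of_orthonormal he, smul_smul,
    inv_mul_cancel₀ two_ne_zero, one_smul]

end Darboux

/-- For a differentiable orthonormal frame `E₁,E₂,E₃ : ℝ → ℝ³` there is a unique
vector field `Ω` with `Eᵢ'(s) = Ω(s) × Eᵢ(s)` for all `i` and `s`. -/
theorem stmt_3 (E E' : Fin 3 → ℝ → (Fin 3 → ℝ))
    (horth : ∀ s i j, E i s ⬝ᵥ E j s = if i = j then 1 else 0)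
    (hderiv : ∀ i s, HasDerivAt (E i) (E' i s) s) :
    ∃! Ω : ℝ → (Fin 3 → ℝ), ∀ s i, E' i s = crossProduct (Ω s) (E i s) := by
  have hskew : ∀ s i j, E' i s ⬝ᵥ E j s + E i s ⬝ᵥ E' j s = 0 := fun s i j =>
    (hderiv i s).dotProduct_add_dotProduct_eq_zero (hderiv j s) (horth · i j)
  refine ⟨fun s => darbouxVector (E · s) (E' · s), fun s i => ?_, fun Ω hΩ => funext fun s => ?_⟩
  · exact (darbouxVector_cross (horth s) (hskew s) i).symm
  · exact eq_darbouxVector_of_cross (horth s) (hΩ s)
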